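/- arXiv:1603.04630 — 9 statements merged into one kernel-verified Lean document; each statement's English description precedes it below -/
import Mathlib

section
/- Let n, m, ι be finite types, S₀ : Matrix n m ℂ with S₀† * S₀ = 1, and (M_μ)_{μ∈ι} a family in Matrix n n ℂ with scalars λ_μ ∈ ℂ such that M_μ * S₀ = λ_μ • S₀ for every μ and Σ_μ M_μ† * M_μ = 1. For any L₁ : Matrix n n ℂ set A_μ := S₀† * M_μ * L₁ * S₀. Then for every ρ : Matrix m m ℂ, writing K := S₀ * ρ * S₀†, one has Σ_μ S₀† * M_μ * (L₁ * K * L₁† − (1/2) * (L₁† * L₁ * K + K * L₁† * L₁)) * M_μ† * S₀ = Σ_μ A_μ * ρ * A_μ† − (1/2) * ((S₀† * L₁† * L₁ * S₀) * ρ + ρ * (S₀† * L₁† * L₁ * S₀)). (Second part of Lemma 1: for a dissipative perturbation with jump operator L₁, the first-order slow dynamics is of Lindblad form with jump operators A_μ = S₀† M_μ L₁ S₀.) -/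
/-!
The compression `X ↦ ∑_μ S₀† M_μ X M_μ† S₀` is evaluated term by term. The jump term
`L₁ K L₁†` regroups into `A_μ ρ A_μ†` by associativity alone. In the anticommutator terms one
factor `S₀ ρ S₀†` sits next to `M_μ` or `M_μ†`, where `M_μ S₀ = λ_μ S₀` and `S₀† S₀ = 1` turn
`S₀† M_μ S₀` into the scalar `λ_μ`; the surviving sums `∑_μ λ_μ M_μ† S₀` and
`∑_μ conj λ_μ S₀† M_μ` collapse to `S₀` and `S₀†` by trace preservation.
-/

open Matrix

section KrausCompression

variable {R n m ι : Type*} [CommSemiring R] [StarRing R] [Fintype n]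

theorem conjTranspose_mul_mul_eq_smul_one [DecidableEq m] {S : Matrix n m R} (hS : Sᴴ * S = 1)
    {N : Matrix n n R} {c : R} (hNS : N * S = c • S) : Sᴴ * N * S = c • 1 := by
  rw [Matrix.mul_assoc, hNS, Matrix.mul_smul, hS]

theorem conjTranspose_mul_conjTranspose_eq_smul {S : Matrix n m R} {N : Matrix n n R} {c : R}
    (hNS : N * S = c • S) : Sᴴ * Nᴴ = star c • Sᴴ := by
  rw [← conjTranspose_mul, hNS, conjTranspose_smul]

theorem sum_smul_conjTranspose_mul_eq [Fintype ι] [DecidableEq n] {S : Matrix n m R}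
    {M : ι → Matrix n n R} {lam : ι → R} (hMS : ∀ μ, M μ * S = lam μ • S)
    (hTP : ∑ μ, (M μ)ᴴ * M μ = 1) :
    ∑ μ, lam μ • ((M μ)ᴴ * S) = S := by
  calc ∑ μ, lam μ • ((M μ)ᴴ * S) = (∑ μ, (M μ)ᴴ * M μ) * S := by
        simp only [Matrix.sum_mul, Matrix.mul_assoc, hMS, Matrix.mul_smul]
    _ = S := by rw [hTP, Matrix.one_mul]

theorem sum_star_smul_conjTranspose_mul_eq [Fintype ι] [DecidableEq n] {S : Matrix n m R}
    {M : ι → Matrix n n R} {lam : ι → R} (hMS : ∀ μ, M μ * S = lam μ • S)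
    (hTP : ∑ μ, (M μ)ᴴ * M μ = 1) :
    ∑ μ, star (lam μ) • (Sᴴ * M μ) = Sᴴ := by
  simpa [conjTranspose_sum, conjTranspose_smul, conjTranspose_mul] using
    congrArg conjTranspose (sum_smul_conjTranspose_mul_eq hMS hTP)

theorem sum_compress_mul_proj [Fintype m] [Fintype ι] [DecidableEq n] [DecidableEq m]
    {S : Matrix n m R} {M : ι → Matrix n n R} {lam : ι → R}
    (hS : Sᴴ * S = 1) (hMS : ∀ μ, M μ * S = lam μ • S) (hTP : ∑ μ, (M μ)ᴴ * M μ = 1)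
    (X : Matrix n n R) (ρ : Matrix m m R) :
    ∑ μ, Sᴴ * M μ * (X * (S * ρ * Sᴴ)) * (M μ)ᴴ * S = Sᴴ * X * S * ρ := by
  have hM'S : ∀ μ, Sᴴ * ((M μ)ᴴ * S) = star (lam μ) • 1 := fun μ => by
    rw [← Matrix.mul_assoc, conjTranspose_mul_conjTranspose_eq_smul (hMS μ), Matrix.smul_mul, hS]
  calc ∑ μ, Sᴴ * M μ * (X * (S * ρ * Sᴴ)) * (M μ)ᴴ * S
      = (∑ μ, star (lam μ) • (Sᴴ * M μ)) * (X * (S * ρ)) := by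
        simp only [Matrix.sum_mul, Matrix.mul_assoc, hM'S, Matrix.smul_mul, Matrix.mul_smul,
          Matrix.mul_one]
    _ = Sᴴ * X * S * ρ := by
        rw [sum_star_smul_conjTranspose_mul_eq hMS hTP]
        simp only [Matrix.mul_assoc]

theorem sum_compress_proj_mul [Fintype m] [Fintype ι] [DecidableEq n] [DecidableEq m]
    {S : Matrix n m R} {M : ι → Matrix n n R} {lam : ι → R}
    (hS : Sᴴ * S = 1) (hMS : ∀ μ, M μ * S = lam μ • S) (hTP : ∑ μ, (M μ)ᴴ * M μ = 1)
    (X : Matrix n n R) (ρ : Matrix m m R) :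
    ∑ μ, Sᴴ * M μ * (S * ρ * Sᴴ * X) * (M μ)ᴴ * S = ρ * (Sᴴ * X * S) := by
  calc ∑ μ, Sᴴ * M μ * (S * ρ * Sᴴ * X) * (M μ)ᴴ * S
      = ∑ μ, (Sᴴ * M μ * S) * (ρ * Sᴴ * X * ((M μ)ᴴ * S)) := by
        simp only [Matrix.mul_assoc]
    _ = ρ * Sᴴ * X * ∑ μ, lam μ • ((M μ)ᴴ * S) := by
        simp only [conjTranspose_mul_mul_eq_smul_one hS (hMS _), Matrix.smul_mul,
          Matrix.one_mul, Matrix.mul_sum, Matrix.mul_smul]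
    _ = ρ * (Sᴴ * X * S) := by
        rw [sum_smul_conjTranspose_mul_eq hMS hTP]
        simp only [Matrix.mul_assoc]

end KrausCompression

/-- Second part of Lemma 1: for a dissipative perturbation with jump operator `L₁`, the
first-order slow dynamics is of Lindblad form with jump operators `A_μ = S₀† M_μ L₁ S₀`. -/
theorem reduced_dissipator_lindblad {n m ι : Type*} [Fintype n] [Fintype m] [Fintype ι]
    [DecidableEq n] [DecidableEq m]
    (S₀ : Matrix n m ℂ) (hS₀ : S₀ᴴ * S₀ = 1)
    (M : ι → Matrix n n ℂ) (lam : ι → ℂ)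
    (hMS : ∀ μ, M μ * S₀ = lam μ • S₀)
    (hTP : ∑ μ, (M μ)ᴴ * M μ = 1)
    (L₁ : Matrix n n ℂ) (ρ : Matrix m m ℂ) :
    ∑ μ, S₀ᴴ * M μ *
        (L₁ * (S₀ * ρ * S₀ᴴ) * L₁ᴴ
          - (1 / 2 : ℂ) • (L₁ᴴ * L₁ * (S₀ * ρ * S₀ᴴ) + (S₀ * ρ * S₀ᴴ) * L₁ᴴ * L₁))
        * (M μ)ᴴ * S₀
      = (∑ μ, (S₀ᴴ * M μ * L₁ * S₀) * ρ * (S₀ᴴ * M μ * L₁ * S₀)ᴴ)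
        - (1 / 2 : ℂ) • ((S₀ᴴ * L₁ᴴ * L₁ * S₀) * ρ + ρ * (S₀ᴴ * L₁ᴴ * L₁ * S₀)) := by
  have hjump : ∀ μ, S₀ᴴ * M μ * (L₁ * (S₀ * ρ * S₀ᴴ) * L₁ᴴ) * (M μ)ᴴ * S₀
      = (S₀ᴴ * M μ * L₁ * S₀) * ρ * (S₀ᴴ * M μ * L₁ * S₀)ᴴ := fun μ => by
    simp only [conjTranspose_mul, conjTranspose_conjTranspose, Matrix.mul_assoc]
  simp only [Matrix.mul_sub, Matrix.sub_mul, Matrix.mul_add, Matrix.add_mul, Matrix.mul_smul,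
    Matrix.smul_mul, Finset.sum_sub_distrib, ← Finset.smul_sum, Finset.sum_add_distrib]
  rw [Matrix.mul_assoc (S₀ * ρ * S₀ᴴ) L₁ᴴ L₁, sum_compress_mul_proj hS₀ hMS hTP,
    sum_compress_proj_mul hS₀ hMS hTP, Finset.sum_congr rfl fun μ _ => hjump μ]
  simp only [Matrix.mul_assoc]
end

section
/- Let n, m, ι be finite types, S₀ : Matrix n m ℂ with S₀† * S₀ = 1, and (M_μ)_{μ∈ι} a family in Matrix n n ℂ; define R : Matrix n n ℂ → Matrix n n ℂ by R(A) = Σ_μ M_μ * A * M_μ†. Let 𝓛₀, 𝓛₁ be linear endomorphisms of Matrix n n ℂ such that R(𝓛₀(A)) = 0 for all A, and R(S₀ * σ * S₀†) = S₀ * σ * S₀† for all σ : Matrix m m ℂ. If linear maps K₁ : Matrix m m ℂ → Matrix n n ℂ and 𝓛_{s,1} : Matrix m m ℂ → Matrix m m ℂ satisfy the first-order invariance condition 𝓛₀(K₁(ρ)) + 𝓛₁(S₀ * ρ * S₀†) = S₀ * 𝓛_{s,1}(ρ) * S₀† for all ρ, then 𝓛_{s,1}(ρ) = S₀† * R(𝓛₁(S₀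 * ρ * S₀†)) * S₀ for all ρ. (Projection formula for the first-order slow generator, from the proof of Lemma 1.) -/
open Matrix

/-! The stationary-state projection `R` kills the image of `𝓛₀` and fixes every `S₀ σ S₀†`, so
applying `R` to the invariance condition gives `R(𝓛₁(S₀ ρ S₀†)) = S₀ 𝓛_{s,1}(ρ) S₀†`; compressing
both sides by the isometry `S₀` recovers `𝓛_{s,1}(ρ)`. -/

theorem Matrix.conjTranspose_mul_conj_mul_of_isometry {n m α : Type*} [Fintype n] [Fintype m]
    [DecidableEq m] [Semiring α] [Star α] {S : Matrix n m α} (hS : Sᴴ * S = 1)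
    (X : Matrix m m α) : Sᴴ * (S * X * Sᴴ) * S = X := by
  calc Sᴴ * (S * X * Sᴴ) * S = (Sᴴ * S) * X * (Sᴴ * S) := by simp only [Matrix.mul_assoc]
    _ = X := by rw [hS, Matrix.one_mul, Matrix.mul_one]

theorem first_order_projection_formula_general {n m ι : Type*} [Fintype n] [Fintype m] [Fintype ι]
    [DecidableEq m]
    (S₀ : Matrix n m ℂ) (hS₀ : S₀ᴴ * S₀ = 1)
    (M : ι → Matrix n n ℂ)
    (𝓛₀ 𝓛₁ : Matrix n n ℂ →ₗ[ℂ] Matrix n n ℂ)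
    (hR𝓛₀ : ∀ A : Matrix n n ℂ, ∑ μ, M μ * 𝓛₀ A * (M μ)ᴴ = 0)
    (hRK₀ : ∀ σ : Matrix m m ℂ, ∑ μ, M μ * (S₀ * σ * S₀ᴴ) * (M μ)ᴴ = S₀ * σ * S₀ᴴ)
    (K₁ : Matrix m m ℂ →ₗ[ℂ] Matrix n n ℂ)
    (𝓛s₁ : Matrix m m ℂ →ₗ[ℂ] Matrix m m ℂ)
    (hinv : ∀ ρ : Matrix m m ℂ,
      𝓛₀ (K₁ ρ) + 𝓛₁ (S₀ * ρ * S₀ᴴ) = S₀ * 𝓛s₁ ρ * S₀ᴴ)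
    (ρ : Matrix m m ℂ) :
    𝓛s₁ ρ = S₀ᴴ * (∑ μ, M μ * 𝓛₁ (S₀ * ρ * S₀ᴴ) * (M μ)ᴴ) * S₀ := by
  have hR_invariance : ∑ μ, M μ * 𝓛₁ (S₀ * ρ * S₀ᴴ) * (M μ)ᴴ = S₀ * 𝓛s₁ ρ * S₀ᴴ :=
    calc ∑ μ, M μ * 𝓛₁ (S₀ * ρ * S₀ᴴ) * (M μ)ᴴ
        = ∑ μ, M μ * (𝓛₀ (K₁ ρ) + 𝓛₁ (S₀ * ρ * S₀ᴴ)) * (M μ)ᴴ := by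
          simp only [Matrix.mul_add, Matrix.add_mul, Finset.sum_add_distrib, hR𝓛₀, zero_add]
      _ = S₀ * 𝓛s₁ ρ * S₀ᴴ := by rw [hinv, hRK₀]
  rw [hR_invariance, conjTranspose_mul_conj_mul_of_isometry hS₀]

/-- Projection formula for the first-order slow generator (proof of Lemma 1): if `K₁` and
`𝓛_{s,1}` satisfy the first-order invariance condition, then
`𝓛_{s,1}(ρ) = S₀† R(𝓛₁(S₀ ρ S₀†)) S₀`. -/
theorem first_order_projection_formula {n m ι : Type*} [Fintype n] [Fintype m] [Fintype ι]
    [DecidableEq n] [DecidableEq m]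
    (S₀ : Matrix n m ℂ) (hS₀ : S₀ᴴ * S₀ = 1)
    (M : ι → Matrix n n ℂ)
    (𝓛₀ 𝓛₁ : Matrix n n ℂ →ₗ[ℂ] Matrix n n ℂ)
    (hR𝓛₀ : ∀ A : Matrix n n ℂ, ∑ μ, M μ * 𝓛₀ A * (M μ)ᴴ = 0)
    (hRK₀ : ∀ σ : Matrix m m ℂ, ∑ μ, M μ * (S₀ * σ * S₀ᴴ) * (M μ)ᴴ = S₀ * σ * S₀ᴴ)
    (K₁ : Matrix m m ℂ →ₗ[ℂ] Matrix n n ℂ)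
    (𝓛s₁ : Matrix m m ℂ →ₗ[ℂ] Matrix m m ℂ)
    (hinv : ∀ ρ : Matrix m m ℂ,
      𝓛₀ (K₁ ρ) + 𝓛₁ (S₀ * ρ * S₀ᴴ) = S₀ * 𝓛s₁ ρ * S₀ᴴ)
    (ρ : Matrix m m ℂ) :
    𝓛s₁ ρ = S₀ᴴ * (∑ μ, M μ * 𝓛₁ (S₀ * ρ * S₀ᴴ) * (M μ)ᴴ) * S₀ :=
  first_order_projection_formula_general S₀ hS₀ M 𝓛₀ 𝓛₁ hR𝓛₀ hRK₀ K₁ 𝓛s₁ hinv ρ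
end

section
/- Let n, m be finite types, S₀ : Matrix n m ℂ with S₀† * S₀ = 1, P₀ := S₀ * S₀†, and L₀ : Matrix n n ℂ with L₀ * S₀ = 0. Let X : Matrix n n ℂ be Hermitian with L₀† * L₀ * X = 1 − P₀, X * (L₀† * L₀) = 1 − P₀, X * P₀ = 0 and P₀ * X = 0. Let H₁ : Matrix n n ℂ be Hermitian, set C₁ := 2 * X * H₁ * P₀ + 2 * P₀ * H₁ * X, and for ρ : Matrix m m ℂ set K₁(ρ) := −i * (C₁ * (S₀ * ρ * S₀†) − (S₀ * ρ * S₀†) * C₁). Then L₀ * K₁(ρ) * L₀† − (1/2) * (L₀† * L₀ * K₁(ρ) + K₁(ρ) * L₀† * L₀) = −i * ((P₀ * H₁ * P₀ − H₁) * (S₀ * ρ * S₀†) − (S₀ * ρ * S₀†) * (P₀ * H₁ * P₀ − H₁)). (Lemma 2: K₁ and the Zeno generator 𝓛_{s,1}(ρ) = −i[S₀†H₁S₀, ρ] solve the first-order invariance equation.) -/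
/-!
Write `r = S₀ρS₀†`. Because `L₀S₀ = 0` and `X` vanishes on `H₀`, `r` is annihilated by `L₀` on
the left, by `L₀†` on the right and by `X` on both sides, while `P₀r = rP₀ = r`. Hence
`[C₁, r] = 2(XH₁r - rH₁X)`; the jump term `L₀(·)L₀†` kills this, and in the anticommutator with
`L₀†L₀` each `X` turns into `1 - P₀`, leaving `-i((P₀ - 1)H₁r - rH₁(P₀ - 1))`, which is
`-i[P₀H₁P₀ - H₁, r]` because `P₀` fixes `r`.
-/

open Matrix Complex

section Sandwich

variable {k n m α : Type*} [Fintype n] [Fintype m] [Semiring α]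
  {S : Matrix n m α} {T : Matrix m n α}

theorem mul_sandwich_eq_zero {B : Matrix k n α} (h : B * S = 0) (ρ : Matrix m m α) :
    B * (S * ρ * T) = 0 := by
  rw [← Matrix.mul_assoc, ← Matrix.mul_assoc, h, Matrix.zero_mul, Matrix.zero_mul]

theorem sandwich_mul_eq_zero {B : Matrix n k α} (h : T * B = 0) (ρ : Matrix m m α) :
    S * ρ * T * B = 0 := by
  rw [Matrix.mul_assoc, h, Matrix.mul_zero]

variable [DecidableEq m]

theorem mul_eq_zero_of_mul_proj_eq_zero (hTS : T * S = 1) {B : Matrix k n α}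
    (h : B * (S * T) = 0) : B * S = 0 := by
  rw [← Matrix.mul_one (B * S), ← hTS, ← Matrix.mul_assoc, Matrix.mul_assoc B, h, Matrix.zero_mul]

theorem mul_eq_zero_of_proj_mul_eq_zero (hTS : T * S = 1) {B : Matrix n k α}
    (h : S * T * B = 0) : T * B = 0 := by
  rw [← Matrix.one_mul (T * B), ← hTS, Matrix.mul_assoc, ← Matrix.mul_assoc S, h, Matrix.mul_zero]

theorem proj_mul_sandwich (hTS : T * S = 1) (ρ : Matrix m m α) :
    S * T * (S * ρ * T) = S * ρ * T := by
  simp only [Matrix.mul_assoc]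
  rw [← Matrix.mul_assoc T, hTS, Matrix.one_mul]

theorem sandwich_mul_proj (hTS : T * S = 1) (ρ : Matrix m m α) :
    S * ρ * T * (S * T) = S * ρ * T := by
  rw [← Matrix.mul_assoc, Matrix.mul_assoc (S * ρ), hTS, Matrix.mul_one]

end Sandwich

section Dissipator

variable {R : Type*} [Ring R] {L L' P X H r : R}

theorem symmetrized_commutator_eq (hPr : P * r = r) (hrP : r * P = r) (hXr : X * r = 0)
    (hrX : r * X = 0) :
    (2 • (X * H * P) + 2 • (P * H * X)) * r - r * (2 • (X * H * P) + 2 • (P * H * X))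
      = 2 • (X * H * r - r * H * X) := by
  have h₁ : X * H * P * r = X * H * r := by rw [mul_assoc, hPr]
  have h₂ : P * H * X * r = 0 := by rw [mul_assoc, hXr, mul_zero]
  have h₃ : r * (X * H * P) = 0 := by simp only [← mul_assoc, hrX, zero_mul]
  have h₄ : r * (P * H * X) = r * H * X := by simp only [← mul_assoc, hrP]
  simp only [add_mul, mul_add, smul_mul_assoc, mul_smul_comm, h₁, h₂, h₃, h₄]
  module

theorem compression_commutator (hPr : P * r = r) (hrP : r * P = r) :
    (P * H * P - H) * r - r * (P * H * P - H) = -((1 - P) * H * r - r * H * (1 - P)) := by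
  have h₁ : P * H * P * r = P * H * r := by rw [mul_assoc, hPr]
  have h₂ : r * (P * H * P) = r * H * P := by simp only [← mul_assoc, hrP]
  simp only [sub_mul, mul_sub, one_mul, mul_one, h₁, h₂]
  abel

variable [Algebra ℂ R]

-- `L'` plays the role of `L†`.
noncomputable def dissipator (L L' : R) : R →ₗ[ℂ] R :=
  LinearMap.mulLeft ℂ L ∘ₗ LinearMap.mulRight ℂ L' -
    (1 / 2 : ℂ) • (LinearMap.mulLeft ℂ (L' * L) + LinearMap.mulRight ℂ (L' * L))

theorem dissipator_apply (L L' K : R) :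
    dissipator L L' K = L * K * L' - (1 / 2 : ℂ) • (L' * L * K + K * (L' * L)) := by
  simp [dissipator, mul_assoc]

theorem dissipator_pseudoinverse_commutator (hLr : L * r = 0) (hrL' : r * L' = 0)
    (hXinv : L' * L * X = 1 - P) (hXinv' : X * (L' * L) = 1 - P) :
    dissipator L L' (X * H * r - r * H * X)
      = -(1 / 2 : ℂ) • ((1 - P) * H * r - r * H * (1 - P)) := by
  have jump₁ : L * (X * H * r) * L' = 0 := by
    rw [mul_assoc L, mul_assoc (X * H), hrL', mul_zero, mul_zero]
  have jump₂ : L * (r * H * X) * L' = 0 := by simp only [← mul_assoc, hLr, zero_mul]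
  have left₁ : L' * L * (X * H * r) = (1 - P) * H * r := by simp only [← mul_assoc, hXinv]
  have left₂ : L' * L * (r * H * X) = 0 := by
    simp only [← mul_assoc]
    rw [mul_assoc L', hLr, mul_zero, zero_mul, zero_mul]
  have right₁ : X * H * r * (L' * L) = 0 := by
    rw [← mul_assoc, mul_assoc (X * H), hrL', mul_zero, zero_mul]
  have right₂ : r * H * X * (L' * L) = r * H * (1 - P) := by rw [mul_assoc (r * H), hXinv']
  rw [dissipator_apply, mul_sub, sub_mul, mul_sub, sub_mul, jump₁, jump₂, left₁, left₂, right₁,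
    right₂]
  module

end Dissipator

theorem K1_solves_first_order_invariance_general {n m : Type*} [Fintype n] [Fintype m]
    [DecidableEq n] [DecidableEq m]
    (S₀ : Matrix n m ℂ) (hS₀ : S₀ᴴ * S₀ = 1)
    (L₀ : Matrix n n ℂ) (hL₀S₀ : L₀ * S₀ = 0)
    (X : Matrix n n ℂ)
    (hXinv : L₀ᴴ * L₀ * X = 1 - S₀ * S₀ᴴ)
    (hXinv' : X * (L₀ᴴ * L₀) = 1 - S₀ * S₀ᴴ)
    (hXP₀ : X * (S₀ * S₀ᴴ) = 0) (hP₀X : (S₀ * S₀ᴴ) * X = 0)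
    (H₁ : Matrix n n ℂ)
    (ρ : Matrix m m ℂ) :
    (let P₀ := S₀ * S₀ᴴ
     let C₁ := 2 • (X * H₁ * P₀) + 2 • (P₀ * H₁ * X)
     let K₁ := (-Complex.I) • (C₁ * (S₀ * ρ * S₀ᴴ) - (S₀ * ρ * S₀ᴴ) * C₁)
     L₀ * K₁ * L₀ᴴ - (1 / 2 : ℂ) • (L₀ᴴ * L₀ * K₁ + K₁ * (L₀ᴴ * L₀))
       = (-Complex.I) • ((P₀ * H₁ * P₀ - H₁) * (S₀ * ρ * S₀ᴴ)
           - (S₀ * ρ * S₀ᴴ) * (P₀ * H₁ * P₀ - H₁))) := by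
  have hS₀L₀ : S₀ᴴ * L₀ᴴ = 0 := by rw [← conjTranspose_mul, hL₀S₀, conjTranspose_zero]
  have hPr := proj_mul_sandwich hS₀ ρ
  have hrP := sandwich_mul_proj hS₀ ρ
  have hLr := mul_sandwich_eq_zero (T := S₀ᴴ) hL₀S₀ ρ
  have hrL := sandwich_mul_eq_zero (S := S₀) hS₀L₀ ρ
  have hXr := mul_sandwich_eq_zero (T := S₀ᴴ) (mul_eq_zero_of_mul_proj_eq_zero hS₀ hXP₀) ρ
  have hrX := sandwich_mul_eq_zero (S := S₀) (mul_eq_zero_of_proj_mul_eq_zero hS₀ hP₀X) ρ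
  dsimp only
  rw [← dissipator_apply, symmetrized_commutator_eq hPr hrP hXr hrX, map_smul, map_nsmul,
    dissipator_pseudoinverse_commutator hLr hrL hXinv hXinv', compression_commutator hPr hrP]
  module

/-- Lemma 2: `K₁(ρ) = −i[C₁, S₀ρS₀†]` with `C₁ = 2(L₀†L₀)⁻¹H₁P₀ + 2P₀H₁(L₀†L₀)⁻¹`, together
with the Zeno generator `𝓛_{s,1}(ρ) = −i[S₀†H₁S₀, ρ]`, solve the first-order invariance
equation. -/
theorem K1_solves_first_order_invariance {n m : Type*} [Fintype n] [Fintype m]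
    [DecidableEq n] [DecidableEq m]
    (S₀ : Matrix n m ℂ) (hS₀ : S₀ᴴ * S₀ = 1)
    (L₀ : Matrix n n ℂ) (hL₀S₀ : L₀ * S₀ = 0)
    (X : Matrix n n ℂ) (hX : Xᴴ = X)
    (hXinv : L₀ᴴ * L₀ * X = 1 - S₀ * S₀ᴴ)
    (hXinv' : X * (L₀ᴴ * L₀) = 1 - S₀ * S₀ᴴ)
    (hXP₀ : X * (S₀ * S₀ᴴ) = 0) (hP₀X : (S₀ * S₀ᴴ) * X = 0)
    (H₁ : Matrix n n ℂ) (hH₁ : H₁ᴴ = H₁)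
    (ρ : Matrix m m ℂ) :
    (let P₀ := S₀ * S₀ᴴ
     let C₁ := 2 • (X * H₁ * P₀) + 2 • (P₀ * H₁ * X)
     let K₁ := (-Complex.I) • (C₁ * (S₀ * ρ * S₀ᴴ) - (S₀ * ρ * S₀ᴴ) * C₁)
     L₀ * K₁ * L₀ᴴ - (1 / 2 : ℂ) • (L₀ᴴ * L₀ * K₁ + K₁ * (L₀ᴴ * L₀))
       = (-Complex.I) • ((P₀ * H₁ * P₀ - H₁) * (S₀ * ρ * S₀ᴴ)
           - (S₀ * ρ * S₀ᴴ) * (P₀ * H₁ * P₀ - H₁))) :=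
  K1_solves_first_order_invariance_general S₀ hS₀ L₀ hL₀S₀ X hXinv hXinv' hXP₀ hP₀X H₁ ρ
end

section
/- Let n, m be finite types, S₀ : Matrix n m ℂ with S₀† * S₀ = 1, P₀ := S₀ * S₀†, and L₀ : Matrix n n ℂ with L₀ * S₀ = 0. Let X, H₁ : Matrix n n ℂ satisfy L₀† * L₀ * X = 1 − P₀ and X * P₀ = 0, and set C₁ := 2 * X * H₁ * P₀ + 2 * P₀ * H₁ * X. Then for every ρ : Matrix m m ℂ, L₀† * L₀ * (C₁ * (S₀ * ρ * S₀†) − (S₀ * ρ * S₀†) * C₁) = 2 * (1 − P₀) * H₁ * S₀ * ρ * S₀†. (Key computation in the proof of Lemma 2.) -/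
/-!
Write `Q := S₀ρS₀†`. Since `S₀` is an isometry into `H₀ = ker L₀`, `Q` is absorbed by `P₀` on the
left and annihilated on the left by both `X` and `L₀†L₀`. Hence `L₀†L₀ Q C₁ = 0` and, in `C₁ Q`,
only the term `2 X H₁ P₀ Q = 2 X H₁ Q` survives, which `L₀†L₀ X = 1 − P₀` turns into `2 (1 − P₀) H₁ Q`.
-/

open Matrix

theorem mul_commutator_of_left_absorbed {R : Type*} [Ring R] {K X P Q : R} (H : R)
    (hKX : K * X = 1 - P) (hKQ : K * Q = 0) (hXQ : X * Q = 0) (hPQ : P * Q = Q) :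
    K * ((2 • (X * H * P) + 2 • (P * H * X)) * Q - Q * (2 • (X * H * P) + 2 • (P * H * X)))
      = 2 • ((1 - P) * H * Q) := by
  set C := 2 • (X * H * P) + 2 • (P * H * X)
  have hCQ : C * Q = 2 • (X * H * Q) := by
    simp only [C, add_mul, smul_mul_assoc, mul_assoc, hPQ, hXQ, mul_zero, smul_zero, add_zero]
  calc K * (C * Q - Q * C) = K * (C * Q) - (K * Q) * C := by rw [mul_sub, mul_assoc]
    _ = 2 • ((K * X) * H * Q) := by rw [hCQ, hKQ, zero_mul, sub_zero, mul_smul_comm, mul_assoc,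
          mul_assoc, mul_assoc]
    _ = 2 • ((1 - P) * H * Q) := by rw [hKX]

section Isometry

variable {n m k : Type*} [Fintype n] [Fintype m] [DecidableEq m] {S : Matrix n m ℂ}

theorem Matrix.isometry_proj_mul_mul (hS : Sᴴ * S = 1) (B : Matrix m k ℂ) :
    S * Sᴴ * (S * B) = S * B := by
  rw [Matrix.mul_assoc, ← Matrix.mul_assoc Sᴴ, hS, Matrix.one_mul]

theorem Matrix.mul_mul_eq_zero_of_mul_isometry_proj {p : Type*} {X : Matrix p n ℂ}
    (hS : Sᴴ * S = 1) (hXP : X * (S * Sᴴ) = 0) (B : Matrix m k ℂ) : X * (S * B) = 0 := by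
  rw [← isometry_proj_mul_mul hS, ← Matrix.mul_assoc, hXP, Matrix.zero_mul]

end Isometry

/-- Key computation in the proof of Lemma 2:
`L₀†L₀ [C₁, S₀ρS₀†] = 2(1 − P₀)H₁P₀ S₀ρS₀†`. -/
theorem L0L0_commutator_C1 {n m : Type*} [Fintype n] [Fintype m]
    [DecidableEq n] [DecidableEq m]
    (S₀ : Matrix n m ℂ) (hS₀ : S₀ᴴ * S₀ = 1)
    (L₀ : Matrix n n ℂ) (hL₀S₀ : L₀ * S₀ = 0)
    (X H₁ : Matrix n n ℂ)
    (hXinv : L₀ᴴ * L₀ * X = 1 - S₀ * S₀ᴴ)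
    (hXP₀ : X * (S₀ * S₀ᴴ) = 0)
    (ρ : Matrix m m ℂ) :
    (let P₀ := S₀ * S₀ᴴ
     let C₁ := 2 • (X * H₁ * P₀) + 2 • (P₀ * H₁ * X)
     L₀ᴴ * L₀ * (C₁ * (S₀ * ρ * S₀ᴴ) - (S₀ * ρ * S₀ᴴ) * C₁)
       = 2 • ((1 - P₀) * H₁ * S₀ * ρ * S₀ᴴ)) := by
  have hKQ : L₀ᴴ * L₀ * (S₀ * ρ * S₀ᴴ) = 0 := by
    rw [Matrix.mul_assoc L₀ᴴ, Matrix.mul_assoc S₀, ← Matrix.mul_assoc L₀, hL₀S₀,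
      Matrix.zero_mul, Matrix.mul_zero]
  have hXQ : X * (S₀ * ρ * S₀ᴴ) = 0 := by
    rw [Matrix.mul_assoc S₀, mul_mul_eq_zero_of_mul_isometry_proj hS₀ hXP₀]
  have hPQ : S₀ * S₀ᴴ * (S₀ * ρ * S₀ᴴ) = S₀ * ρ * S₀ᴴ := by
    rw [Matrix.mul_assoc S₀ ρ, isometry_proj_mul_mul hS₀]
  simpa only [Matrix.mul_assoc] using mul_commutator_of_left_absorbed H₁ hXinv hKQ hXQ hPQ
end

section
/- Let n, m, ι be finite types, S₀ : Matrix n m ℂ with S₀† * S₀ = 1, P₀ := S₀ * S₀†, and (M_μ)_{μ∈ι} a family in Matrix n n ℂ such that for every A : Matrix n n ℂ, Σ_μ M_μ * (A * P₀) * M_μ† = P₀ * A * P₀ and Σ_μ M_μ * (P₀ * A) * M_μ† = P₀ * A * P₀. Let X, H₁ : Matrix n n ℂ with X * P₀ = 0 and P₀ * X = 0, and set C₁ := 2 * X * H₁ * P₀ + 2 * P₀ * H₁ * X. Then for every ρ : Matrix m m ℂ, writing T := S₀ * ((S₀† * H₁ * S₀) * ρ − ρ * (S₀† * H₁ * S₀))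 * S₀†, one has Σ_μ M_μ * (C₁ * T − T * C₁) * M_μ† = 0. (The claim R(K₁(𝓛_{s,1}(ρ_s))) = 0 in the proof of Lemma 3.) -/
/-!
Every matrix of the form `T = S₀ N S₀†` satisfies `P₀ T = T P₀ = T`, so `X T = T X = 0` and
the commutator `[C₁, T]` collapses to `2 X H₁ T - 2 T H₁ X`. Since `X H₁ T = (X H₁ T) P₀`, the
limit map sends it to `P₀ X H₁ T P₀ = 0`; symmetrically for `T H₁ X`.
-/

open Matrix

section ProjectorAlgebra

variable {A : Type*} [NonUnitalRing A] {P X T : A}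

theorem commutator_eq_of_orthogonal (hXP : X * P = 0) (hPX : P * X = 0)
    (hPT : P * T = T) (hTP : T * P = T) (H : A) :
    (2 • (X * H * P) + 2 • (P * H * X)) * T - T * (2 • (X * H * P) + 2 • (P * H * X)) =
      2 • (X * H * T) - 2 • (T * H * X) := by
  have hXT : X * T = 0 := by rw [← hPT, ← mul_assoc, hXP, zero_mul]
  have hTX_mul (b : A) : T * (X * b) = 0 := by
    rw [← hTP, mul_assoc, ← mul_assoc P, hPX, zero_mul, mul_zero]
  have hTP_mul (b : A) : T * (P * b) = T * b := by rw [← mul_assoc, hTP]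
  simp only [add_mul, mul_add, smul_mul_assoc, mul_smul_comm, mul_assoc, hPT, hXT, hTX_mul,
    hTP_mul, mul_zero, smul_zero, add_zero, zero_add]

variable (R : A →+ A)

theorem map_mul_eq_zero_of_mul_right_eq (hR : ∀ a, R (a * P) = P * a * P) (hPX : P * X = 0)
    {a : A} (ha : a * P = a) : R (X * a) = 0 := by
  rw [← ha, ← mul_assoc, hR, ← mul_assoc, hPX, zero_mul, zero_mul]

theorem map_mul_eq_zero_of_mul_left_eq (hR : ∀ a, R (P * a) = P * a * P) (hXP : X * P = 0)
    {a : A} (ha : P * a = a) : R (a * X) = 0 := by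
  rw [← ha, mul_assoc, hR, mul_assoc, mul_assoc, hXP, mul_zero, mul_zero]

theorem map_commutator_eq_zero (hRr : ∀ a, R (a * P) = P * a * P)
    (hRl : ∀ a, R (P * a) = P * a * P) (hXP : X * P = 0) (hPX : P * X = 0)
    (hPT : P * T = T) (hTP : T * P = T) (H : A) :
    R ((2 • (X * H * P) + 2 • (P * H * X)) * T - T * (2 • (X * H * P) + 2 • (P * H * X))) =
      0 := by
  rw [commutator_eq_of_orthogonal hXP hPX hPT hTP, map_sub, map_nsmul, map_nsmul,
    mul_assoc X, map_mul_eq_zero_of_mul_right_eq R hRr hPX (by rw [mul_assoc, hTP]),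
    map_mul_eq_zero_of_mul_left_eq R hRl hXP (by rw [← mul_assoc, hPT]), smul_zero, sub_zero]

end ProjectorAlgebra

namespace Matrix

variable {n m α : Type*} [Fintype n] [Fintype m]

def krausMap {ι : Type*} [Fintype ι] [Ring α] [StarRing α] (M : ι → Matrix n n α) :
    Matrix n n α →+ Matrix n n α :=
  AddMonoidHom.mk' (fun A => ∑ μ, M μ * A * (M μ)ᴴ) fun A B => by
    simp only [mul_add, add_mul, Finset.sum_add_distrib]

variable [DecidableEq m] [Semiring α] {S : Matrix n m α} {V : Matrix m n α}

theorem mul_sandwich_of_mul_eq_one (hVS : V * S = 1) (N : Matrix m m α) :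
    S * V * (S * N * V) = S * N * V := by
  rw [Matrix.mul_assoc S V, ← Matrix.mul_assoc V, ← Matrix.mul_assoc V, hVS, Matrix.one_mul,
    Matrix.mul_assoc]

theorem sandwich_mul_of_mul_eq_one (hVS : V * S = 1) (N : Matrix m m α) :
    S * N * V * (S * V) = S * N * V := by
  rw [Matrix.mul_assoc _ V, ← Matrix.mul_assoc V, hVS, Matrix.one_mul]

end Matrix

theorem R_K1_Ls1_vanishes_general {n m ι : Type*} [Fintype n] [Fintype m] [Fintype ι]
    [DecidableEq m]
    (S₀ : Matrix n m ℂ) (hS₀ : S₀ᴴ * S₀ = 1)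
    (M : ι → Matrix n n ℂ)
    (hRr : ∀ A : Matrix n n ℂ,
      ∑ μ, M μ * (A * (S₀ * S₀ᴴ)) * (M μ)ᴴ = (S₀ * S₀ᴴ) * A * (S₀ * S₀ᴴ))
    (hRl : ∀ A : Matrix n n ℂ,
      ∑ μ, M μ * ((S₀ * S₀ᴴ) * A) * (M μ)ᴴ = (S₀ * S₀ᴴ) * A * (S₀ * S₀ᴴ))
    (X H₁ : Matrix n n ℂ)
    (hXP₀ : X * (S₀ * S₀ᴴ) = 0) (hP₀X : (S₀ * S₀ᴴ) * X = 0)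
    (ρ : Matrix m m ℂ) :
    (let P₀ := S₀ * S₀ᴴ
     let C₁ := 2 • (X * H₁ * P₀) + 2 • (P₀ * H₁ * X)
     let T := S₀ * ((S₀ᴴ * H₁ * S₀) * ρ - ρ * (S₀ᴴ * H₁ * S₀)) * S₀ᴴ
     ∑ μ, M μ * (C₁ * T - T * C₁) * (M μ)ᴴ = 0) :=
  map_commutator_eq_zero (krausMap M) hRr hRl hXP₀ hP₀X
    (mul_sandwich_of_mul_eq_one hS₀ _) (sandwich_mul_of_mul_eq_one hS₀ _) H₁

/-- The claim `R(K₁(𝓛_{s,1}(ρ_s))) = 0` in the proof of Lemma 3. -/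
theorem R_K1_Ls1_vanishes {n m ι : Type*} [Fintype n] [Fintype m] [Fintype ι]
    [DecidableEq n] [DecidableEq m]
    (S₀ : Matrix n m ℂ) (hS₀ : S₀ᴴ * S₀ = 1)
    (M : ι → Matrix n n ℂ)
    (hRr : ∀ A : Matrix n n ℂ,
      ∑ μ, M μ * (A * (S₀ * S₀ᴴ)) * (M μ)ᴴ = (S₀ * S₀ᴴ) * A * (S₀ * S₀ᴴ))
    (hRl : ∀ A : Matrix n n ℂ,
      ∑ μ, M μ * ((S₀ * S₀ᴴ) * A) * (M μ)ᴴ = (S₀ * S₀ᴴ) * A * (S₀ * S₀ᴴ))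
    (X H₁ : Matrix n n ℂ)
    (hXP₀ : X * (S₀ * S₀ᴴ) = 0) (hP₀X : (S₀ * S₀ᴴ) * X = 0)
    (ρ : Matrix m m ℂ) :
    (let P₀ := S₀ * S₀ᴴ
     let C₁ := 2 • (X * H₁ * P₀) + 2 • (P₀ * H₁ * X)
     let T := S₀ * ((S₀ᴴ * H₁ * S₀) * ρ - ρ * (S₀ᴴ * H₁ * S₀)) * S₀ᴴ
     ∑ μ, M μ * (C₁ * T - T * C₁) * (M μ)ᴴ = 0) :=
  R_K1_Ls1_vanishes_general S₀ hS₀ M hRr hRl X H₁ hXP₀ hP₀X ρ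
end

section
/- Let n, ι be finite types, P₀, L₀, X : Matrix n n ℂ and (M_μ)_{μ∈ι} a family in Matrix n n ℂ; define R(A) := Σ_μ M_μ * A * M_μ†. Assume: (i) R(L₀ * B * L₀†) = (1/2) * R(L₀† * L₀ * B + B * L₀† * L₀) for all B (i.e. R annihilates the fast dissipator); (ii) R(B * P₀) = P₀ * B * P₀ and R(P₀ * B) = P₀ * B * P₀ for all B; (iii) L₀† * L₀ * X = 1 − P₀ and X * (L₀† * L₀) = 1 − P₀; (iv) X * P₀ = 0 and P₀ * X = 0. Then for every Y : Matrix n n ℂ, 2 * R(L₀ * X * Y * X * L₀†) = R(Y * X + X * Y). (Intermediate identity in the proof of Lemma 3, applied with Y = H₁ S₀ρ_s S₀† H₁.) -/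
/-!
With `K = L₀ᴴ L₀`, apply the dissipator identity to `B = X Y X`. Since `X` inverts `K` off `P₀`,
`K (X Y X) + (X Y X) K = Y X + X Y - P₀ Y X - X Y P₀`, and the two correction terms are killed by `R`:
`R (P₀ Y X) = P₀ Y X P₀ = 0` and `R (X Y P₀) = P₀ X Y P₀ = 0`.
-/

open Matrix

def Matrix.krausMap_s9 {n ι α : Type*} [Fintype n] [Fintype ι] [NonUnitalNonAssocSemiring α] [Star α]
    (M : ι → Matrix n n α) : Matrix n n α →+ Matrix n n α where
  toFun B := ∑ μ, M μ * B * (M μ)ᴴ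
  map_zero' := by simp
  map_add' B C := by simp only [Matrix.mul_add, Matrix.add_mul, Finset.sum_add_distrib]

section Sandwich

variable {A : Type*} [Ring A] {K X P : A}

theorem anticomm_sandwich_eq (hKX : K * X = 1 - P) (hXK : X * K = 1 - P) (Y : A) :
    K * (X * Y * X) + X * Y * X * K = Y * X + X * Y - (P * (Y * X) + X * Y * P) := by
  have hleft : K * (X * Y * X) = (K * X) * (Y * X) := by simp only [mul_assoc]
  have hright : X * Y * X * K = (X * Y) * (X * K) := by simp only [mul_assoc]
  rw [hleft, hright, hKX, hXK]
  noncomm_ring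

theorem map_anticomm_sandwich (R : A →+ A) (hKX : K * X = 1 - P) (hXK : X * K = 1 - P)
    (hXP : X * P = 0) (hPX : P * X = 0)
    (hRl : ∀ b, R (P * b) = P * b * P) (hRr : ∀ b, R (b * P) = P * b * P) (Y : A) :
    R (K * (X * Y * X) + X * Y * X * K) = R (Y * X + X * Y) := by
  have hRl_zero : R (P * (Y * X)) = 0 := by
    rw [hRl, mul_assoc, mul_assoc, hXP, mul_zero, mul_zero]
  have hRr_zero : R (X * Y * P) = 0 := by
    rw [hRr, ← mul_assoc, hPX, zero_mul, zero_mul]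
  rw [anticomm_sandwich_eq hKX hXK, map_sub, map_add R (P * (Y * X)), hRl_zero, hRr_zero, add_zero, sub_zero]

end Sandwich

/-- Intermediate identity in the proof of Lemma 3 (applied with `Y = H₁ S₀ρ_s S₀† H₁`):
`2 R(L₀ X Y X L₀†) = R(Y X + X Y)`. -/
theorem R_sandwich_identity {n ι : Type*} [Fintype n] [Fintype ι] [DecidableEq n]
    (P₀ L₀ X : Matrix n n ℂ)
    (M : ι → Matrix n n ℂ)
    (hRdiss : ∀ B : Matrix n n ℂ,
      ∑ μ, M μ * (L₀ * B * L₀ᴴ) * (M μ)ᴴ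
        = (1 / 2 : ℂ) • (∑ μ, M μ * (L₀ᴴ * L₀ * B + B * (L₀ᴴ * L₀)) * (M μ)ᴴ))
    (hRr : ∀ B : Matrix n n ℂ, ∑ μ, M μ * (B * P₀) * (M μ)ᴴ = P₀ * B * P₀)
    (hRl : ∀ B : Matrix n n ℂ, ∑ μ, M μ * (P₀ * B) * (M μ)ᴴ = P₀ * B * P₀)
    (hXinv : L₀ᴴ * L₀ * X = 1 - P₀)
    (hXinv' : X * (L₀ᴴ * L₀) = 1 - P₀)
    (hXP₀ : X * P₀ = 0) (hP₀X : P₀ * X = 0)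
    (Y : Matrix n n ℂ) :
    2 • (∑ μ, M μ * (L₀ * X * Y * X * L₀ᴴ) * (M μ)ᴴ)
      = ∑ μ, M μ * (Y * X + X * Y) * (M μ)ᴴ := by
  have hdiss : krausMap_s9 M (L₀ * (X * Y * X) * L₀ᴴ) = (1 / 2 : ℂ) • krausMap_s9 M (Y * X + X * Y) := by
    rw [← map_anticomm_sandwich (krausMap_s9 M) hXinv hXinv' hXP₀ hP₀X hRl hRr Y]
    exact hRdiss (X * Y * X)
  have hsandwich : L₀ * X * Y * X * L₀ᴴ = L₀ * (X * Y * X) * L₀ᴴ := by simp only [mul_assoc]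
  change 2 • krausMap_s9 M (L₀ * X * Y * X * L₀ᴴ) = krausMap_s9 M (Y * X + X * Y)
  rw [hsandwich, hdiss, ← Nat.cast_smul_eq_nsmul ℂ, smul_smul]
  norm_num
end

section
/- Let n be a finite type, c : n → ℂ a unit vector (Σ_k |c k|² = 1), and (M_μ)_{μ∈ι} a finite family of matrices in Matrix n n ℂ such that Σ_μ M_μ * (c ⬝ c†) * M_μ† = c ⬝ c†, where c ⬝ c† denotes the rank-one outer product (vecMulVec c (star ∘ c)). Then there exist complex numbers λ_μ such that M_μ.mulVec c = λ_μ • c for every μ, and Σ_μ |λ_μ|² = 1. (Equation (eq:MmuC): every Kraus operator of a completely positive map fixing a pure state admits that state as an eigenvector.) -/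
/-!
Write `v μ = M μ c`, so that the hypothesis reads `∑ μ, v μ (v μ)† = c c†`. Sandwiching it
between the projection `P = 1 - c c†` and `P†` gives `∑ μ, (P v μ) (P v μ)† = 0`, and the trace
`∑ μ, ‖P v μ‖²` of the left side vanishes only if every `P v μ = 0`, i.e.
`v μ = ⟨c, v μ⟩ c`. The trace of the hypothesis itself then reads `∑ μ, |⟨c, v μ⟩|² = ‖c‖² = 1`.
-/

open Matrix
open scoped ComplexOrder

namespace Matrix

variable {ι m n R 𝕜 : Type*} [Fintype ι] [Fintype n]

theorem mul_vecMulVec_star_mul_conjTranspose [Fintype m] [NonUnitalSemiring R] [StarRing R]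
    (A : Matrix m n R) (v : n → R) :
    A * vecMulVec v (star v) * Aᴴ = vecMulVec (A *ᵥ v) (star (A *ᵥ v)) := by
  rw [mul_vecMulVec, vecMulVec_mul, star_mulVec]

theorem eq_zero_of_sum_vecMulVec_star_eq_zero [PartialOrder R] [NonUnitalRing R] [StarRing R]
    [StarOrderedRing R] [NoZeroDivisors R] {v : ι → n → R}
    (h : ∑ μ, vecMulVec (v μ) (star (v μ)) = 0) (μ : ι) : v μ = 0 := by
  have htr := congrArg trace h
  simp only [trace_sum, trace_vecMulVec, trace_zero] at htr
  rw [Finset.sum_eq_zero_iff_of_nonneg fun μ _ => dotProduct_self_star_nonneg (v μ)] at htr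
  exact dotProduct_self_star_eq_zero.mp (htr μ (Finset.mem_univ μ))

theorem mulVec_eq_zero_of_sum_vecMulVec_star_eq [Fintype m] [PartialOrder R] [Ring R] [StarRing R]
    [StarOrderedRing R] [NoZeroDivisors R] {v : ι → n → R} {c : n → R}
    (h : ∑ μ, vecMulVec (v μ) (star (v μ)) = vecMulVec c (star c))
    {P : Matrix m n R} (hP : P *ᵥ c = 0) (μ : ι) : P *ᵥ v μ = 0 := by
  refine eq_zero_of_sum_vecMulVec_star_eq_zero (v := fun μ => P *ᵥ v μ) ?_ μ
  have := congrArg (fun X => P * X * Pᴴ) h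
  simpa only [Matrix.mul_sum, Matrix.sum_mul, mul_vecMulVec_star_mul_conjTranspose, hP,
    zero_vecMulVec] using this

theorem eq_smul_of_sum_vecMulVec_star_eq [CommRing R] [PartialOrder R] [StarRing R]
    [StarOrderedRing R] [NoZeroDivisors R] [DecidableEq n] {v : ι → n → R} {c : n → R}
    (hc : star c ⬝ᵥ c = 1) (h : ∑ μ, vecMulVec (v μ) (star (v μ)) = vecMulVec c (star c))
    (μ : ι) : v μ = (star c ⬝ᵥ v μ) • c := by
  have hproj : ∀ w : n → R, (1 - vecMulVec c (star c)) *ᵥ w = w - (star c ⬝ᵥ w) • c := by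
    intro w
    rw [sub_mulVec, one_mulVec, vecMulVec_mulVec, op_smul_eq_smul]
  have := mulVec_eq_zero_of_sum_vecMulVec_star_eq h (P := 1 - vecMulVec c (star c))
    (by rw [hproj, hc, one_smul, sub_self]) μ
  rwa [hproj, sub_eq_zero] at this

theorem dotProduct_star_eq_sum_norm_sq [RCLike 𝕜] (v : n → 𝕜) :
    v ⬝ᵥ star v = ((∑ i, ‖v i‖ ^ 2 : ℝ) : 𝕜) := by
  simp [dotProduct, RCLike.mul_conj]

theorem sum_norm_sq_eq_one_of_sum_vecMulVec_star_eq [RCLike 𝕜] {v : ι → n → 𝕜} {c : n → 𝕜}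
    {lam : ι → 𝕜} (hc : star c ⬝ᵥ c = 1) (hv : ∀ μ, v μ = lam μ • c)
    (h : ∑ μ, vecMulVec (v μ) (star (v μ)) = vecMulVec c (star c)) :
    ∑ μ, ‖lam μ‖ ^ 2 = 1 := by
  have htr := congrArg trace h
  simp only [trace_sum, trace_vecMulVec, hv, star_smul, smul_dotProduct, dotProduct_smul,
    dotProduct_comm c, hc, smul_eq_mul, mul_one, RCLike.star_def, RCLike.conj_mul] at htr
  exact_mod_cast htr

end Matrix

/-- Equation (eq:MmuC): every Kraus operator of a completely positive map fixing the pure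
state `|c⟩⟨c|` admits the unit vector `c` as an eigenvector, with eigenvalues of unit total
square modulus. -/
theorem kraus_fixes_pure_state {n ι : Type*} [Fintype n] [Fintype ι] [DecidableEq n]
    (c : n → ℂ) (hc : ∑ k, ‖c k‖ ^ 2 = 1)
    (M : ι → Matrix n n ℂ)
    (hfix : ∑ μ, M μ * Matrix.vecMulVec c (star ∘ c) * (M μ)ᴴ
      = Matrix.vecMulVec c (star ∘ c)) :
    ∃ lam : ι → ℂ,
      (∀ μ, (M μ).mulVec c = lam μ • c) ∧ ∑ μ, ‖lam μ‖ ^ 2 = 1 := by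
  have hc_unit : star c ⬝ᵥ c = 1 := by
    rw [dotProduct_comm, dotProduct_star_eq_sum_norm_sq, hc, RCLike.ofReal_one]
  have hkraus : ∑ μ, vecMulVec (M μ *ᵥ c) (star (M μ *ᵥ c)) = vecMulVec c (star c) := by
    simp only [← mul_vecMulVec_star_mul_conjTranspose]
    exact hfix
  have heig := eq_smul_of_sum_vecMulVec_star_eq hc_unit hkraus
  exact ⟨_, heig, sum_norm_sq_eq_one_of_sum_vecMulVec_star_eq hc_unit heig hkraus⟩
end

section
/- Let n, ι be finite types, P₀ : Matrix n n ℂ, and (M_μ)_{μ∈ι} a family in Matrix n n ℂ such that Σ_μ M_μ† * M_μ = 1 and P₀ * (Σ_μ M_μ * ρ * M_μ†) = Σ_μ M_μ * ρ * M_μ† for every ρ : Matrix n n ℂ. Then Σ_μ M_μ† * P₀ * M_μ = 1. (Equation (eq:RP0): the adjoint of the limit Kraus map sends the projector P₀ onto the decoherence-free subspace to the identity, R*(P₀) = I.) -/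
open Matrix

theorem trace_mul_sum_conjTranspose_mul_mul {m n ι R : Type*} [Fintype m] [Fintype n]
    [Fintype ι] [CommSemiring R] [StarRing R] (M : ι → Matrix m n R) (X : Matrix m m R)
    (ρ : Matrix n n R) :
    trace (ρ * ∑ μ, (M μ)ᴴ * X * M μ) = trace (X * ∑ μ, M μ * ρ * (M μ)ᴴ) := by
  simp only [Finset.mul_sum, trace_sum]
  refine Finset.sum_congr rfl fun μ _ => ?_
  calc trace (ρ * ((M μ)ᴴ * X * M μ)) = trace ((ρ * (M μ)ᴴ) * (X * M μ)) := by
        simp only [Matrix.mul_assoc]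
    _ = trace ((X * M μ) * (ρ * (M μ)ᴴ)) := trace_mul_comm _ _
    _ = trace (X * (M μ * ρ * (M μ)ᴴ)) := by simp only [Matrix.mul_assoc]

/-- Equation (eq:RP0): the adjoint of the trace-preserving limit Kraus map, whose range is
supported in the range of the projector `P₀`, sends `P₀` to the identity: `R*(P₀) = I`. -/
theorem adjoint_limit_map_P0_eq_one {n ι : Type*} [Fintype n] [Fintype ι] [DecidableEq n]
    (P₀ : Matrix n n ℂ)
    (M : ι → Matrix n n ℂ)
    (hTP : ∑ μ, (M μ)ᴴ * M μ = 1)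
    (hsupp : ∀ ρ : Matrix n n ℂ,
      P₀ * (∑ μ, M μ * ρ * (M μ)ᴴ) = ∑ μ, M μ * ρ * (M μ)ᴴ) :
    ∑ μ, (M μ)ᴴ * P₀ * M μ = 1 := by
  refine ext_iff_trace_mul_left.mpr fun ρ => ?_
  calc trace (ρ * ∑ μ, (M μ)ᴴ * P₀ * M μ) = trace (P₀ * ∑ μ, M μ * ρ * (M μ)ᴴ) :=
        trace_mul_sum_conjTranspose_mul_mul M P₀ ρ
    _ = trace (1 * ∑ μ, M μ * ρ * (M μ)ᴴ) := by rw [hsupp, Matrix.one_mul]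
    _ = trace (ρ * ∑ μ, (M μ)ᴴ * 1 * M μ) := (trace_mul_sum_conjTranspose_mul_mul M 1 ρ).symm
    _ = trace (ρ * 1) := by simp only [Matrix.mul_one, hTP]
end

section
/- Let 𝓛 be a continuous linear endomorphism of Matrix n n ℂ (n a finite type) and R : Matrix n n ℂ → Matrix n n ℂ a map such that for every x, exp(t • 𝓛) x tends to R x as the real parameter t tends to +∞. Then R (R x) = R x for every x, i.e. R is idempotent. (The limit map R is a projection onto the stationary manifold of the fast dynamics.) -/
/-!
For every `s`, `e^{s𝓛}(e^{t𝓛} x) = e^{(s+t)𝓛} x` tends to `R x` as `t → ∞`, while by continuity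
it also tends to `e^{s𝓛}(R x)`; so `R x` is a fixed point of the whole semigroup, and the limit of
its (constant) orbit, `R (R x)`, is `R x` itself.
-/

open Filter Topology Function NormedSpace

attribute [local instance] Matrix.normedAddCommGroup Matrix.normedSpace

theorem NormedSpace.exp_add_smul {𝔸 S : Type*} [NormedRing 𝔸] [NormedAlgebra ℚ 𝔸] [CompleteSpace 𝔸]
    [Semiring S] [Module S 𝔸] [IsScalarTower S 𝔸 𝔸] [SMulCommClass S 𝔸 𝔸] (a : 𝔸) (s t : S) :
    exp ((s + t) • a) = exp (s • a) * exp (t • a) := by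
  rw [add_smul]
  exact exp_add_of_commute (((Commute.refl a).smul_left s).smul_right t)

theorem ContinuousLinearMap.exp_add_smul_apply {𝕜 E : Type*} [RCLike 𝕜] [NormedAddCommGroup E]
    [NormedSpace 𝕜 E] [NormedSpace ℝ E] [IsScalarTower ℝ 𝕜 E] [CompleteSpace E]
    (L : E →L[𝕜] E) (s t : ℝ) (x : E) :
    exp ((s + t) • L) x = exp (s • L) (exp (t • L) x) :=
  let _ : NormedAlgebra ℚ (E →L[𝕜] E) := .restrictScalars ℚ 𝕜 _
  congrArg (· x) (exp_add_smul L s t)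

section Semigroup

variable {M X : Type*} [AddCommGroup M] [LinearOrder M] [IsOrderedAddMonoid M]
  [TopologicalSpace X] [T2Space X] {T : M → X → X}

theorem isFixedPt_of_tendsto_semigroup (hT : ∀ s, Continuous (T s))
    (hadd : ∀ s t x, T (s + t) x = T s (T t x)) {x y : X}
    (hxy : Tendsto (fun t => T t x) atTop (𝓝 y)) (s : M) : IsFixedPt (T s) y := by
  have hshift : Tendsto (fun t => T s (T t x)) atTop (𝓝 y) :=
    (hxy.comp (tendsto_atTop_add_const_left atTop s tendsto_id)).congr fun t => hadd s t x
  exact tendsto_nhds_unique (((hT s).tendsto y).comp hxy) hshift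

theorem semigroup_limit_idempotent (hT : ∀ s, Continuous (T s))
    (hadd : ∀ s t x, T (s + t) x = T s (T t x)) {R : X → X}
    (hR : ∀ x, Tendsto (fun t => T t x) atTop (𝓝 (R x))) (x : X) : R (R x) = R x := by
  have hfix : ∀ t, T t (R x) = R x := isFixedPt_of_tendsto_semigroup hT hadd (hR x)
  exact tendsto_nhds_unique (hR (R x)) (by simpa only [hfix] using tendsto_const_nhds)

end Semigroup

theorem limit_map_idempotent_general {n : Type*} [Fintype n]
    (𝓛 : Matrix n n ℂ →L[ℂ] Matrix n n ℂ)
    (R : Matrix n n ℂ → Matrix n n ℂ)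
    (hconv : ∀ x : Matrix n n ℂ,
      Filter.Tendsto (fun t : ℝ => @NormedSpace.exp _ _ _
        (letI : NormedRing (Matrix n n ℂ →L[ℂ] Matrix n n ℂ) := ContinuousLinearMap.toNormedRing;
          NonUnitalSeminormedRing.toIsTopologicalRing) (t • 𝓛) x)
        Filter.atTop (nhds (R x)))
    (x : Matrix n n ℂ) :
    R (R x) = R x := by
  have : CompleteSpace (Matrix n n ℂ) := FiniteDimensional.complete ℂ _
  exact semigroup_limit_idempotent (fun _ => ContinuousLinearMap.continuous _)
    (ContinuousLinearMap.exp_add_smul_apply 𝓛) hconv x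

/-- The limit map `R` of the semigroup generated by `𝓛` is idempotent: it is a projection
onto the stationary manifold of the fast dynamics. -/
theorem limit_map_idempotent {n : Type*} [Fintype n] [DecidableEq n]
    (𝓛 : Matrix n n ℂ →L[ℂ] Matrix n n ℂ)
    (R : Matrix n n ℂ → Matrix n n ℂ)
    (hconv : ∀ x : Matrix n n ℂ,
      Filter.Tendsto (fun t : ℝ => @NormedSpace.exp _ _ _
        (letI : NormedRing (Matrix n n ℂ →L[ℂ] Matrix n n ℂ) := ContinuousLinearMap.toNormedRing;
          NonUnitalSeminormedRing.toIsTopologicalRing) (t • 𝓛) x)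
        Filter.atTop (nhds (R x)))
    (x : Matrix n n ℂ) :
    R (R x) = R x :=
  limit_map_idempotent_general 𝓛 R hconv x
end
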